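/- Let Ω ⊆ ℂ be open and let A, B, C, D : Ω → ℂ be holomorphic with A(z)D(z) − B(z)C(z) = 1 for all z ∈ Ω. Define w(z) = 1/(|A(z)|² + |B(z)|²) and ζ(z) = (conj(A(z))·C(z) + conj(B(z))·D(z))/(|A(z)|² + |B(z)|²). Then for every z ∈ Ω, −(ζ(z)²/w(z)²)·conj(D_z ζ(z) + i·D_{iz} ζ(z)) + D_z ζ(z) − 2i·(log w(z))·D_{iz} ζ(z) − (2ζ(z)/w(z))·D_z w(z) = 2z·(C′(z)·D(z) − C(z)·D′(z)) + i·D_{iz} ζ(z) − 2i·(D_{iz} ζ(z)·log w(z) + ζ(z)·(1/w(z))·D_{iz} w(z)), where D_v f(z) denotes the real Fréchet derivative of f at z applied to the vector v ∈ ℂ. -/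

import Mathlib

/-!
Write real derivatives in Wirtinger form `D_v f = (∂f) v + (∂̄f) v̄`. Then
`D_z f − i D_{iz} f = 2z ∂f` and `D_z f + i D_{iz} f = 2z̄ ∂̄f`, the logarithmic terms cancel,
and the identity reduces to `∂ζ − 2ζ ∂w / w − ζ² conj(∂̄ζ) / w² = C′D − CD′`. With
`N = |A|² + |B|²` and `P = ĀC + B̄D` (so `w = 1/N`, `ζ = P/N`) this is a polynomial identity,
which follows from `AD − BC = 1`, its derivative, and Lagrange's identity
`|P|² + |AD − BC|² = N (|C|² + |D|²)`.
-/

open Complex ComplexConjugate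

/-- The `ℝ`-linear map `v ↦ a v + b v̄`; as a real derivative, `a = ∂f` and `b = ∂̄f`. -/
noncomputable def wirtingerCLM (a b : ℂ) : ℂ →L[ℝ] ℂ :=
  a • (1 : ℂ →L[ℝ] ℂ) + b • conjCLE.toContinuousLinearMap

@[simp]
theorem wirtingerCLM_apply (a b v : ℂ) : wirtingerCLM a b v = a * v + b * conj v := by
  simp [wirtingerCLM]

theorem wirtingerCLM_apply_sub_I_mul (a b z : ℂ) :
    wirtingerCLM a b z - I * wirtingerCLM a b (I * z) = 2 * a * z := by
  simp only [wirtingerCLM_apply, map_mul, conj_I]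
  linear_combination (-(a * z) + b * conj z) * I_sq

theorem wirtingerCLM_apply_add_I_mul (a b z : ℂ) :
    wirtingerCLM a b z + I * wirtingerCLM a b (I * z) = 2 * b * conj z := by
  simp only [wirtingerCLM_apply, map_mul, conj_I]
  linear_combination (a * z - b * conj z) * I_sq

section Wirtinger

variable {f g : ℂ → ℂ} {z a b c d f' : ℂ}

theorem HasDerivAt.hasFDerivAt_wirtinger (h : HasDerivAt f f' z) :
    HasFDerivAt f (wirtingerCLM f' 0) z := by
  refine (h.hasFDerivAt.restrictScalars ℝ).congr_fderiv ?_
  ext v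
  simp [mul_comm]

theorem HasDerivAt.hasFDerivAt_conj_wirtinger (h : HasDerivAt f f' z) :
    HasFDerivAt (fun x => conj (f x)) (wirtingerCLM 0 (conj f')) z := by
  refine (conjCLE.toContinuousLinearMap.hasFDerivAt.comp z h.hasFDerivAt_wirtinger).congr_fderiv ?_
  ext v
  simp

theorem HasFDerivAt.add_wirtinger (hf : HasFDerivAt f (wirtingerCLM a b) z)
    (hg : HasFDerivAt g (wirtingerCLM c d) z) :
    HasFDerivAt (fun x => f x + g x) (wirtingerCLM (a + c) (b + d)) z := by
  refine (hf.add hg).congr_fderiv ?_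
  ext v
  simp
  ring

theorem HasFDerivAt.mul_wirtinger (hf : HasFDerivAt f (wirtingerCLM a b) z)
    (hg : HasFDerivAt g (wirtingerCLM c d) z) :
    HasFDerivAt (fun x => f x * g x) (wirtingerCLM (f z * c + g z * a) (f z * d + g z * b)) z := by
  refine (hf.mul hg).congr_fderiv ?_
  ext v
  simp
  ring

theorem HasFDerivAt.inv_wirtinger (hf : HasFDerivAt f (wirtingerCLM a b) z) (hz : f z ≠ 0) :
    HasFDerivAt (fun x => (f x)⁻¹) (wirtingerCLM (-a / f z ^ 2) (-b / f z ^ 2)) z := by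
  refine ((hasFDerivAt_inv' (𝕜 := ℝ) hz).comp z hf).congr_fderiv ?_
  ext v
  simp
  field_simp
  ring

theorem HasDerivAt.hasFDerivAt_conj_mul_add_conj_mul {A B C D : ℂ → ℂ} {A' B' C' D' : ℂ}
    (hA : HasDerivAt A A' z) (hB : HasDerivAt B B' z) (hC : HasDerivAt C C' z)
    (hD : HasDerivAt D D' z) :
    HasFDerivAt (fun x => conj (A x) * C x + conj (B x) * D x)
      (wirtingerCLM (conj (A z) * C' + conj (B z) * D') (C z * conj A' + D z * conj B')) z := by
  refine ((hA.hasFDerivAt_conj_wirtinger.mul_wirtinger hC.hasFDerivAt_wirtinger).add_wirtinger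
    (hB.hasFDerivAt_conj_wirtinger.mul_wirtinger hD.hasFDerivAt_wirtinger)).congr_fderiv ?_
  congr 1 <;> ring

end Wirtinger

theorem ofReal_fderiv_apply_of_hasFDerivAt {E : Type*} [NormedAddCommGroup E] [NormedSpace ℝ E]
    {w : E → ℝ} {L : E →L[ℝ] ℂ} {z : E} (h : HasFDerivAt (fun x => (w x : ℂ)) L z) (v : E) :
    (fderiv ℝ w z v : ℂ) = L v := by
  have hw : HasFDerivAt w (reCLM.comp L) z := by
    simpa [Function.comp_def] using reCLM.hasFDerivAt.comp z h
  have hL := h.unique (ofRealCLM.hasFDerivAt.comp z hw)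
  rw [hw.fderiv]
  exact DFunLike.congr_fun hL.symm v

theorem conj_mul_add_conj_mul_ne_zero {a b c d : ℂ} (h : a * d - b * c = 1) :
    conj a * a + conj b * b ≠ 0 := by
  rw [conj_mul', conj_mul']
  norm_cast
  intro h0
  obtain ⟨ha, hb⟩ := (add_eq_zero_iff_of_nonneg (by positivity) (by positivity)).mp h0
  simp_all

theorem sl2_identity {A B C D A' B' C' D' N P : ℂ} (hdet : A * D - B * C = 1)
    (hdet' : A' * D + A * D' - (B' * C + B * C') = 0)
    (hN : N = conj A * A + conj B * B) (hP : P = conj A * C + conj B * D) :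
    N * (conj A * C' + conj B * D') + P * (conj A * A' + conj B * B') * (1 + P * conj P)
      - N * P ^ 2 * (A' * conj C + B' * conj D) = (C' * D - C * D') * N ^ 2 := by
  have hdet_conj : conj A * conj D - conj B * conj C = 1 := by
    simpa using congrArg conj hdet
  have lagrange : 1 + P * conj P = N * (conj C * C + conj D * D) := by
    rw [hN, hP]
    simp only [map_add, map_mul, conj_conj]
    linear_combination (-(conj A * conj D - conj B * conj C)) * hdet - hdet_conj
  have key : (conj A * C' + conj B * D') + P * (conj A * A' + conj B * B') * (conj C * C + conj D * D)
      - P ^ 2 * (A' * conj C + B' * conj D) = (C' * D - C * D') * N := by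
    rw [hN, hP]
    linear_combination (-(conj A * C') - conj B * D') * hdet
      + ((conj A * C + conj B * D) * (A' * D - B' * C)) * hdet_conj
      + (conj A * C + conj B * D) * hdet'
  rw [lagrange]
  linear_combination N * key

theorem polar_identity_of_wirtinger {z ζ₀ a b c d K : ℂ} {w₀ : ℝ}
    (hK : a - 2 * ζ₀ * c / w₀ - ζ₀ ^ 2 * conj b / (w₀ : ℂ) ^ 2 = K) :
    - (ζ₀ ^ 2 / (w₀ : ℂ) ^ 2) * conj (wirtingerCLM a b z + I * wirtingerCLM a b (I * z))
        + wirtingerCLM a b z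
        - 2 * I * (Real.log w₀ : ℂ) * wirtingerCLM a b (I * z)
        - (2 * ζ₀ / (w₀ : ℂ)) * wirtingerCLM c d z =
      2 * z * K + I * wirtingerCLM a b (I * z)
        - 2 * I * (wirtingerCLM a b (I * z) * (Real.log w₀ : ℂ)
          + ζ₀ * ((1 / w₀ : ℝ) : ℂ) * wirtingerCLM c d (I * z)) := by
  rw [wirtingerCLM_apply_add_I_mul, ← hK]
  have hζ := wirtingerCLM_apply_sub_I_mul a b z
  have hw := wirtingerCLM_apply_sub_I_mul c d z
  simp only [map_mul, conj_conj, map_ofNat]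
  push_cast
  linear_combination hζ - 2 * ζ₀ / w₀ * hw

/-- Expression of the coefficient `a₃(z)` (lemma coeffintegral, third identity):
`−(ζ²/w²)·conj(ρ ∂ζ/∂ρ + i ∂ζ/∂τ) + ρ ∂ζ/∂ρ − 2i (ln w) ∂ζ/∂τ − (2ζ/w)·ρ ∂w/∂ρ
 = 2z(C′D − CD′) + i ∂ζ/∂τ − 2i ∂(ζ ln w)/∂τ`,
where `ρ ∂f/∂ρ(z) = D_z f(z)` and `∂f/∂τ(z) = D_{iz} f(z)` are real Fréchet
derivatives applied to the vectors `z` and `iz` respectively. -/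
theorem stmt4 (Ω : Set ℂ) (hΩ : IsOpen Ω) (A B C D : ℂ → ℂ)
    (hA : DifferentiableOn ℂ A Ω) (hB : DifferentiableOn ℂ B Ω)
    (hC : DifferentiableOn ℂ C Ω) (hD : DifferentiableOn ℂ D Ω)
    (hdet : ∀ z ∈ Ω, A z * D z - B z * C z = 1)
    (w : ℂ → ℝ) (ζ : ℂ → ℂ)
    (hw : ∀ z, w z = 1 / (‖A z‖ ^ 2 + ‖B z‖ ^ 2))
    (hζ : ∀ z, ζ z = ((starRingEnd ℂ) (A z) * C z + (starRingEnd ℂ) (B z) * D z) /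
      ((‖A z‖ ^ 2 + ‖B z‖ ^ 2 : ℝ) : ℂ)) :
    ∀ z ∈ Ω,
      - (ζ z ^ 2 / (w z : ℂ) ^ 2) *
          (starRingEnd ℂ) (fderiv ℝ ζ z z + Complex.I * fderiv ℝ ζ z (Complex.I * z))
        + fderiv ℝ ζ z z
        - 2 * Complex.I * (Real.log (w z) : ℂ) * fderiv ℝ ζ z (Complex.I * z)
        - (2 * ζ z / (w z : ℂ)) * ((fderiv ℝ w z z : ℝ) : ℂ) =
      2 * z * (deriv C z * D z - C z * deriv D z)
        + Complex.I * fderiv ℝ ζ z (Complex.I * z)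
        - 2 * Complex.I *
            (fderiv ℝ ζ z (Complex.I * z) * (Real.log (w z) : ℂ)
              + ζ z * ((1 / w z : ℝ) : ℂ) * ((fderiv ℝ w z (Complex.I * z) : ℝ) : ℂ)) := by
  intro z hz
  have hasDerivAt_of_on : ∀ F : ℂ → ℂ, DifferentiableOn ℂ F Ω → HasDerivAt F (deriv F z) z :=
    fun F hF => ((hF z hz).differentiableAt (hΩ.mem_nhds hz)).hasDerivAt
  obtain ⟨hA', hB', hC', hD'⟩ : _ ∧ _ ∧ _ ∧ _ := ⟨hasDerivAt_of_on A hA, hasDerivAt_of_on B hB,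
    hasDerivAt_of_on C hC, hasDerivAt_of_on D hD⟩
  have hdet' : deriv A z * D z + A z * deriv D z - (deriv B z * C z + B z * deriv C z) = 0 := by
    refine ((hA'.mul hD').sub (hB'.mul hC')).unique
      ((hasDerivAt_const z (1 : ℂ)).congr_of_eventuallyEq ?_)
    filter_upwards [hΩ.mem_nhds hz] with x hx using hdet x hx
  have hwN (x : ℂ) : (w x : ℂ) = (conj (A x) * A x + conj (B x) * B x)⁻¹ := by
    rw [hw, conj_mul', conj_mul']; push_cast; ring
  have hζP (x : ℂ) : ζ x = (conj (A x) * C x + conj (B x) * D x) * (w x : ℂ) := by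
    rw [hζ, hw]; push_cast; ring
  have hN := conj_mul_add_conj_mul_ne_zero (hdet z hz)
  have hW := (hA'.hasFDerivAt_conj_mul_add_conj_mul hB' hA' hB').inv_wirtinger hN
  rw [← funext hwN] at hW
  have hZ := (hA'.hasFDerivAt_conj_mul_add_conj_mul hB' hC' hD').mul_wirtinger hW
  rw [← funext hζP] at hZ
  rw [ofReal_fderiv_apply_of_hasFDerivAt hW, ofReal_fderiv_apply_of_hasFDerivAt hW, hZ.fderiv]
  refine polar_identity_of_wirtinger ?_
  have key := sl2_identity (hdet z hz) hdet' rfl rfl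
  simp only [map_add, map_mul, conj_conj] at key
  rw [hζP, hwN]
  simp only [map_add, map_mul, map_neg, map_div₀, map_pow, conj_conj, map_inv₀]
  field_simp
  linear_combination key
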